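/- arXiv:1309.6129 — 3 statements merged into one kernel-verified Lean document; each statement's English description precedes it below -/
import Mathlib

section
/- For any ε ∈ (0,1), if K = (8ρ/ε)·log(8ρ/ε) + (4/ε)·log C + (4/ε)·log(1/ε) + 2 with ρ ≥ 1 and C ≥ 1, then C·(1-ε)^(K-1)·K^ρ ≤ ε. -/
/-!
Since `1 - ε ≤ exp (-ε)`, it suffices to prove `log C + ρ log K ≤ log ε + ε (K - 1)`.
With `a = 8ρ/ε` and `L = log C + log (1/ε) ≥ 0` we have `K = a log a + (4/ε) L + 2`, so
`ε (K - 1) = 8ρ log a + 4L + ε` and `log ε = log C - L`. On the other side `K ≤ a² (1 + L)`, and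
`ρ log (1 + L) ≤ ρ log ρ + L ≤ ρ log a + L` (from `1 + L ≤ ρ (1 + L/ρ)`), so `ρ log K ≤ 3ρ log a + L`,
which is far below `8ρ log a + 3L + ε`.
-/

open Real

namespace Real

theorem one_sub_rpow_le_exp_neg_mul {x t : ℝ} (hx : x ≤ 1) (ht : 0 ≤ t) :
    (1 - x) ^ t ≤ exp (-(x * t)) :=
  calc (1 - x) ^ t ≤ exp (-x) ^ t :=
        rpow_le_rpow (by linarith) (by linarith [add_one_le_exp (-x)]) ht
    _ = exp (-(x * t)) := by rw [← exp_mul, neg_mul]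

theorem mul_one_sub_rpow_mul_rpow_le {C ε K ρ : ℝ} (hC : 0 < C) (hε0 : 0 < ε) (hε1 : ε ≤ 1)
    (hK : 1 ≤ K) (h : log C + ρ * log K ≤ log ε + ε * (K - 1)) :
    C * (1 - ε) ^ (K - 1) * K ^ ρ ≤ ε :=
  calc C * (1 - ε) ^ (K - 1) * K ^ ρ ≤ C * exp (-(ε * (K - 1))) * K ^ ρ := by
        gcongr
        exact one_sub_rpow_le_exp_neg_mul hε1 (by linarith)
    _ = exp (log C + ρ * log K - ε * (K - 1)) := by
        rw [rpow_def_of_pos (by linarith), exp_sub, exp_add, exp_log hC, mul_comm (log K),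
          exp_neg, div_eq_mul_inv]
        ring
    _ ≤ exp (log ε) := exp_le_exp.mpr (by linarith)
    _ = ε := exp_log hε0

theorem mul_log_one_add_le {ρ L : ℝ} (hρ : 1 ≤ ρ) (hL : 0 ≤ L) :
    ρ * log (1 + L) ≤ ρ * log ρ + L := by
  have hρ0 : 0 < ρ := by linarith
  have hsplit : 1 + L ≤ ρ * (1 + L / ρ) := by
    rw [mul_add, mul_div_cancel₀ L hρ0.ne']
    linarith
  have hlog : log (1 + L) ≤ log ρ + L / ρ :=
    calc log (1 + L) ≤ log (ρ * (1 + L / ρ)) := log_le_log (by linarith) hsplit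
      _ = log ρ + log (1 + L / ρ) := log_mul hρ0.ne' (by positivity)
      _ ≤ log ρ + L / ρ := by linarith [log_le_sub_one_of_pos (by positivity : 0 < 1 + L / ρ)]
  calc ρ * log (1 + L) ≤ ρ * (log ρ + L / ρ) := mul_le_mul_of_nonneg_left hlog hρ0.le
    _ = ρ * log ρ + L := by field_simp

theorem mul_log_le_of_le_sq_mul {ρ a L K : ℝ} (hρ : 1 ≤ ρ) (hρa : ρ ≤ a) (hL : 0 ≤ L)
    (hK0 : 0 < K) (hK : K ≤ a ^ 2 * (1 + L)) : ρ * log K ≤ 3 * ρ * log a + L := by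
  have ha : 0 < a := by linarith
  have hlogK : log K ≤ 2 * log a + log (1 + L) :=
    calc log K ≤ log (a ^ 2 * (1 + L)) := log_le_log hK0 hK
      _ = 2 * log a + log (1 + L) := by
        rw [log_mul (by positivity) (by linarith), log_pow, Nat.cast_ofNat]
  have hlogρ : log ρ ≤ log a := log_le_log (by linarith) hρa
  calc ρ * log K ≤ ρ * (2 * log a) + ρ * log (1 + L) := by
        rw [← mul_add]; exact mul_le_mul_of_nonneg_left hlogK (by linarith)
    _ ≤ ρ * (2 * log a) + (ρ * log a + L) := by
        linarith [mul_log_one_add_le hρ hL, mul_le_mul_of_nonneg_left hlogρ (by linarith : 0 ≤ ρ)]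
    _ = 3 * ρ * log a + L := by ring

theorem mul_log_add_mul_add_two_le {a b L : ℝ} (ha : 2 ≤ a) (hb : b ≤ a) (hL : 0 ≤ L) :
    a * log a + b * L + 2 ≤ a ^ 2 * (1 + L) := by
  have hlog : log a ≤ a - 1 := log_le_sub_one_of_pos (by linarith)
  have h1 : a * log a ≤ a * (a - 1) := mul_le_mul_of_nonneg_left hlog (by linarith)
  have h2 : b * L ≤ a * L := mul_le_mul_of_nonneg_right hb hL
  have h3 : a * L ≤ a ^ 2 * L := mul_le_mul_of_nonneg_right (by nlinarith) hL
  nlinarith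

end Real

theorem stmt_0 (ρ C ε K : ℝ) (hρ : 1 ≤ ρ) (hC : 1 ≤ C)
    (hε : ε ∈ Set.Ioo (0:ℝ) 1)
    (hK : K = 8 * ρ / ε * Real.log (8 * ρ / ε) + 4 / ε * Real.log C
      + 4 / ε * Real.log (1 / ε) + 2) :
    C * (1 - ε) ^ (K - 1) * K ^ ρ ≤ ε := by
  obtain ⟨hε0, hε1⟩ := hε
  set a := 8 * ρ / ε with ha
  set L := log C + log (1 / ε) with hL
  have hL0 : 0 ≤ L := add_nonneg (log_nonneg hC) (log_nonneg (by rw [le_div_iff₀ hε0]; linarith))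
  have hρa : 8 * ρ ≤ a := by rw [ha, le_div_iff₀ hε0]; nlinarith
  have h4a : 4 / ε ≤ a := by rw [ha]; gcongr; linarith
  have hKa : K = a * log a + 4 / ε * L + 2 := by rw [hK]; ring
  have hK_le : K ≤ a ^ 2 * (1 + L) := hKa ▸ mul_log_add_mul_add_two_le (by linarith) h4a hL0
  have hK1 : 1 ≤ K := by
    rw [hKa]; nlinarith [log_nonneg (by linarith : 1 ≤ a), mul_nonneg (by positivity : 0 ≤ 4 / ε) hL0]
  have hlogK : ρ * log K ≤ 3 * ρ * log a + L :=
    mul_log_le_of_le_sq_mul hρ (by linarith) hL0 (by linarith) hK_le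
  have hεK : ε * (K - 1) = 8 * ρ * log a + 4 * L + ε := by rw [hKa, ha]; field_simp; ring
  have hlogε : log ε = log C - L := by rw [hL, one_div, log_inv]; ring
  have hρlog : 0 ≤ ρ * log a := mul_nonneg (by linarith) (log_nonneg (by linarith))
  exact mul_one_sub_rpow_mul_rpow_le (by linarith) hε0 hε1.le hK1 (by linarith)
end

section
/- Consider a pairwise MRF on a finite graph G = (V,E) with energy H(x̄) = ∑_{i∈V} ln φ_i(x_i) + ∑_{(i,j)∈E} ln ψ_{ij}(x_i,x_j), where ln φ_i ≥ 0 and ln ψ_{ij} ≥ 0 pointwise. If G has maximum degree d*, then (d*+1)·max_{x̄} H(x̄) ≥ ∑_{(i,j)∈E} (ψ^U_{ij} - ψ^L_{ij}), where ψ^U_{ij} = max_{σ,σ'} ln ψ_{ij}(σ,σ') and ψ^L_{ij} = min_{σ,σ'} ln ψ_{ij}(σ,σ'). -/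
/-!
Since `ψ^L ≥ 0`, it suffices to bound `∑ ψ^U` by `(d* + 1) max H`. By Vizing's theorem the
edges split into `d* + 1` matchings. On a matching one labelling puts every edge on its maximising
pair of labels, and as all log-potentials are nonnegative its energy is at least the sum of the
`ψ^U` over the matching; it is also at most `max H`. Summing over the matchings gives the bound.

Vizing's theorem is proved by adding the edges one at a time: a maximal fan at an endpoint of the
new edge, possibly after one Kempe swap along the alternating path from its centre, has a colour
missing both at the centre and at its tip, and rotating the fan colours the new edge. The walk that
alternates between two involutions `f, g`, started at a fixed point of `f`, is periodic and
symmetric about the places where it stalls, so it meets the fixed points of `g` in one vertex only: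
the alternating path has a single far end.
-/

open Finset

section EdgeColoring

variable {V α : Type*}

def IsProperEdgeColoring (E : Finset (Sym2 V)) (col : Sym2 V → α) : Prop :=
  ∀ e ∈ E, ∀ f ∈ E, ∀ v ∈ e, v ∈ f → col e = col f → e = f

def IsMissingColor (E : Finset (Sym2 V)) (col : Sym2 V → α) (v : V) (k : α) : Prop :=
  ∀ e ∈ E, v ∈ e → col e ≠ k

variable {E E' : Finset (Sym2 V)} {col : Sym2 V → α} {v : V} {k : α}

theorem IsProperEdgeColoring.mono (h : IsProperEdgeColoring E col) (hE : E' ⊆ E) :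
    IsProperEdgeColoring E' col :=
  fun e he f hf => h e (hE he) f (hE hf)

theorem IsMissingColor.mono (h : IsMissingColor E col v k) (hE : E' ⊆ E) :
    IsMissingColor E' col v k :=
  fun e he => h e (hE he)

theorem IsMissingColor.ne (h : IsMissingColor E col v k) {w : V} (hw : s(v, w) ∈ E) :
    col s(v, w) ≠ k :=
  h _ hw (Sym2.mem_mk_left v w)

theorem exists_isMissingColor [DecidableEq V] [Fintype α] (col : Sym2 V → α) (v : V)
    (h : #(E.filter (v ∈ ·)) < Fintype.card α) : ∃ k, IsMissingColor E col v k := by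
  classical
  obtain ⟨k, -, hk⟩ := exists_mem_notMem_of_card_lt_card
    ((card_image_le (s := E.filter (v ∈ ·)) (f := col)).trans_lt h)
  exact ⟨k, fun e he hv hek => hk (mem_image.2 ⟨e, mem_filter.2 ⟨he, hv⟩, hek⟩)⟩

theorem IsProperEdgeColoring.insert_update [DecidableEq V] (h : IsProperEdgeColoring E col)
    {e : Sym2 V} {β : α} (hβ : ∀ v ∈ e, IsMissingColor E col v β) :
    IsProperEdgeColoring (insert e E) (Function.update col e β) := by
  have key : ∀ f ∈ insert e E, f ≠ e → ∀ v ∈ e, v ∈ f → Function.update col e β f ≠ β := by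
    intro f hf hfe v hve hvf
    rw [Function.update_of_ne hfe]
    exact hβ v hve f ((mem_insert.1 hf).resolve_left hfe) hvf
  intro f hf g hg v hvf hvg hfg
  by_cases hf' : f = e <;> by_cases hg' : g = e
  · rw [hf', hg']
  · subst hf'
    exact absurd (hfg.symm.trans (Function.update_self ..)) (key g hg hg' v hvf hvg)
  · subst hg'
    exact absurd (hfg.trans (Function.update_self ..)) (key f hf hf' v hvg hvf)
  · rw [Function.update_of_ne hf', Function.update_of_ne hg'] at hfg
    exact h f ((mem_insert.1 hf).resolve_left hf') g ((mem_insert.1 hg).resolve_left hg') v hvf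
      hvg hfg

theorem IsMissingColor.update_of_notMem [DecidableEq V] (h : IsMissingColor E col v k)
    {e : Sym2 V} (hv : v ∉ e) (β : α) : IsMissingColor E (Function.update col e β) v k := by
  intro f hf hvf
  rw [Function.update_of_ne (by rintro rfl; exact hv hvf)]
  exact h f hf hvf

end EdgeColoring

section KempeSwap

variable {V α : Type*} [DecidableEq α] {E : Finset (Sym2 V)} {col : Sym2 V → α}
  {S : Set V} {c d k : α} {v : V} {e : Sym2 V}

/-- `S` is a union of connected components of the subgraph of the edges coloured `c` or `d`. -/
def IsKempeClosed (E : Finset (Sym2 V)) (col : Sym2 V → α) (c d : α) (S : Set V) : Prop :=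
  ∀ v w, s(v, w) ∈ E → (col s(v, w) = c ∨ col s(v, w) = d) → v ∈ S → w ∈ S

open Classical in
noncomputable def swapColorsOn (S : Set V) (c d : α) (col : Sym2 V → α) (e : Sym2 V) : α :=
  if ∃ v ∈ e, v ∈ S then Equiv.swap c d (col e) else col e

theorem swapColorsOn_of_mem (hv : v ∈ S) (he : v ∈ e) :
    swapColorsOn S c d col e = Equiv.swap c d (col e) :=
  if_pos ⟨v, he, hv⟩

theorem swapColorsOn_eq_iff_of_ne (hc : k ≠ c) (hd : k ≠ d) :
    swapColorsOn S c d col e = k ↔ col e = k := by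
  unfold swapColorsOn
  split_ifs
  · rw [Equiv.swap_apply_eq_iff, Equiv.swap_apply_of_ne_of_ne hc hd]
  · rfl

theorem swapColorsOn_of_notMem (hS : IsKempeClosed E col c d S) (hv : v ∉ S) (he : e ∈ E)
    (hve : v ∈ e) :
    swapColorsOn S c d col e = col e := by
  unfold swapColorsOn
  split_ifs with hmeet
  · obtain ⟨u, hue, huS⟩ := hmeet
    have heq : e = s(u, v) := (Sym2.mem_and_mem_iff (by rintro rfl; exact hv huS)).1 ⟨hue, hve⟩
    subst heq
    refine Equiv.swap_apply_of_ne_of_ne (fun h => hv ?_) (fun h => hv ?_)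
    exacts [hS u v he (Or.inl h) huS, hS u v he (Or.inr h) huS]
  · rfl

theorem isMissingColor_swapColorsOn_iff_of_mem (hv : v ∈ S) :
    IsMissingColor E (swapColorsOn S c d col) v k ↔ IsMissingColor E col v (Equiv.swap c d k) := by
  refine forall₂_congr fun e _ => forall_congr' fun hve => ?_
  rw [swapColorsOn_of_mem hv hve, Ne, Equiv.swap_apply_eq_iff]

theorem isMissingColor_swapColorsOn_iff_of_notMem (hS : IsKempeClosed E col c d S)
    (hv : v ∉ S) : IsMissingColor E (swapColorsOn S c d col) v k ↔ IsMissingColor E col v k :=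
  forall₂_congr fun e he => forall_congr' fun hve => by rw [swapColorsOn_of_notMem hS hv he hve]

theorem isMissingColor_swapColorsOn_iff_of_ne (hc : k ≠ c) (hd : k ≠ d) :
    IsMissingColor E (swapColorsOn S c d col) v k ↔ IsMissingColor E col v k :=
  forall₂_congr fun _ _ => forall_congr' fun _ => not_congr (swapColorsOn_eq_iff_of_ne hc hd)

theorem IsProperEdgeColoring.swapColorsOn (h : IsProperEdgeColoring E col)
    (hS : IsKempeClosed E col c d S) :
    IsProperEdgeColoring E (swapColorsOn S c d col) := by
  intro e he f hf v hve hvf hef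
  by_cases hv : v ∈ S
  · rw [swapColorsOn_of_mem hv hve, swapColorsOn_of_mem hv hvf] at hef
    exact h e he f hf v hve hvf ((Equiv.swap c d).injective hef)
  · rw [swapColorsOn_of_notMem hS hv he hve, swapColorsOn_of_notMem hS hv hf hvf] at hef
    exact h e he f hf v hve hvf hef

end KempeSwap

section AlternatingWalk

variable {V : Type*}

def altWalk (f g : V → V) (x : V) : ℕ → V
  | 0 => x
  | n + 1 => (if n % 2 = 0 then g else f) (altWalk f g x n)

variable {f g : V → V} {x : V}

theorem altWalk_succ (n : ℕ) :
    altWalk f g x (n + 1) = (if n % 2 = 0 then g else f) (altWalk f g x n) := rfl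

theorem altWalk_succ_back (hf : f.Involutive) (hg : g.Involutive) (n : ℕ) :
    (if n % 2 = 0 then g else f) (altWalk f g x (n + 1)) = altWalk f g x n := by
  rw [altWalk_succ]
  split_ifs
  exacts [hg _, hf _]

theorem apply_altWalk_mem_range (hf : f.Involutive) (hg : g.Involutive) (hx : f x = x) (n : ℕ) :
    f (altWalk f g x n) ∈ Set.range (altWalk f g x) ∧
      g (altWalk f g x n) ∈ Set.range (altWalk f g x) := by
  rcases n with _ | n
  · exact ⟨⟨0, hx.symm⟩, ⟨1, rfl⟩⟩
  have hback := altWalk_succ_back (x := x) hf hg n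
  have hnext := altWalk_succ (f := f) (g := g) (x := x) (n + 1)
  rcases Nat.mod_two_eq_zero_or_one n with h | h
  · rw [if_pos h] at hback
    rw [if_neg (by omega)] at hnext
    exact ⟨⟨n + 2, hnext⟩, ⟨n, hback.symm⟩⟩
  · rw [if_neg (by omega)] at hback
    rw [if_pos (by omega)] at hnext
    exact ⟨⟨n, hback.symm⟩, ⟨n + 2, hnext⟩⟩

theorem altWalk_reflect (hf : f.Involutive) (hg : g.Involutive) {N : ℕ}
    (hN : altWalk f g x (N + 1) = altWalk f g x N) {m : ℕ} (hm : m ≤ N) :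
    altWalk f g x (N + 1 + m) = altWalk f g x (N - m) := by
  induction m with
  | zero => simpa using hN
  | succ m ih =>
    rw [← add_assoc, altWalk_succ, ih (by omega), show N - m = N - (m + 1) + 1 by omega,
      show (N + 1 + m) % 2 = (N - (m + 1)) % 2 by omega, altWalk_succ_back hf hg]

theorem altWalk_periodic (hf : f.Involutive) (hg : g.Involutive) (hx : f x = x) {N : ℕ}
    (hN : altWalk f g x (N + 1) = altWalk f g x N) :
    Function.Periodic (altWalk f g x) (2 * N + 2) := by
  intro m
  induction m with
  | zero =>
    have h := altWalk_reflect hf hg hN (le_refl N)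
    rw [Nat.sub_self, show N + 1 + N = 2 * N + 1 by ring] at h
    rw [zero_add, altWalk_succ, if_neg (by omega), h]
    exact hx
  | succ m ih =>
    rw [show m + 1 + (2 * N + 2) = m + (2 * N + 2) + 1 by ring, altWalk_succ, altWalk_succ, ih,
      show (m + (2 * N + 2)) % 2 = m % 2 by omega]

theorem exists_le_altWalk_eq (hf : f.Involutive) (hg : g.Involutive) (hx : f x = x) {N : ℕ}
    (hN : altWalk f g x (N + 1) = altWalk f g x N) (m : ℕ) :
    ∃ i ≤ N, altWalk f g x m = altWalk f g x i := by
  rw [← (altWalk_periodic hf hg hx hN).map_mod_nat]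
  set j := m % (2 * N + 2)
  have hj : j < 2 * N + 2 := Nat.mod_lt _ (by omega)
  by_cases hjN : j ≤ N
  · exact ⟨j, hjN, rfl⟩
  · refine ⟨N - (j - N - 1), by omega, ?_⟩
    rw [← altWalk_reflect hf hg hN (by omega), show N + 1 + (j - N - 1) = j by omega]

theorem exists_altWalk_stall_of_fixed (hf : f.Involutive) (hg : g.Involutive) {i : ℕ}
    (hi : g (altWalk f g x i) = altWalk f g x i) :
    ∃ n, altWalk f g x (n + 1) = altWalk f g x n := by
  rcases Nat.even_or_odd' i with ⟨n, rfl | rfl⟩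
  · exact ⟨2 * n, by rw [altWalk_succ, if_pos (by omega), hi]⟩
  · refine ⟨2 * n, ?_⟩
    have hback := altWalk_succ_back (x := x) hf hg (2 * n)
    rw [if_pos (by omega), hi] at hback
    exact hback

theorem eq_altWalk_of_isLeast_stall (hf : f.Involutive) (hg : g.Involutive) (hx : f x = x)
    {N : ℕ} (hN : altWalk f g x (N + 1) = altWalk f g x N)
    (hmin : ∀ n < N, altWalk f g x (n + 1) ≠ altWalk f g x n)
    {a : V} (ha : a ∈ Set.range (altWalk f g x)) (hga : g a = a) :
    a = altWalk f g x N := by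
  obtain ⟨m, rfl⟩ := ha
  obtain ⟨j, hjN, hj⟩ := exists_le_altWalk_eq hf hg hx hN m
  rw [hj] at hga ⊢
  rcases Nat.even_or_odd' j with ⟨n, rfl | rfl⟩
  · rcases Nat.eq_or_lt_of_le hjN with h | h
    · rw [h]
    · exact absurd (by rw [altWalk_succ, if_pos (by omega), hga]) (hmin _ h)
  · have hback := altWalk_succ_back (x := x) hf hg (2 * n)
    rw [if_pos (by omega), hga] at hback
    exact absurd hback (hmin (2 * n) (by omega))

theorem eq_of_fixed_mem_range_altWalk (hf : f.Involutive) (hg : g.Involutive) (hx : f x = x)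
    {a b : V} (ha : a ∈ Set.range (altWalk f g x)) (hb : b ∈ Set.range (altWalk f g x))
    (hga : g a = a) (hgb : g b = b) : a = b := by
  classical
  obtain ⟨i, rfl⟩ := ha
  have hstall := exists_altWalk_stall_of_fixed hf hg hga
  have hN := Nat.find_spec hstall
  have hmin : ∀ n < Nat.find hstall, _ := fun n hn => Nat.find_min hstall hn
  rw [eq_altWalk_of_isLeast_stall hf hg hx hN hmin ⟨i, rfl⟩ hga,
    eq_altWalk_of_isLeast_stall hf hg hx hN hmin hb hgb]

end AlternatingWalk

section Partner

variable {V α : Type*} {E : Finset (Sym2 V)} {col : Sym2 V → α} {k : α} {v w : V}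

open Classical in
noncomputable def partner (E : Finset (Sym2 V)) (col : Sym2 V → α) (k : α) (v : V) : V :=
  if h : ∃ w, s(v, w) ∈ E ∧ col s(v, w) = k then h.choose else v

theorem partner_eq_of_mem (hcol : IsProperEdgeColoring E col) (h : s(v, w) ∈ E)
    (hk : col s(v, w) = k) : partner E col k v = w := by
  have hex : ∃ w, s(v, w) ∈ E ∧ col s(v, w) = k := ⟨w, h, hk⟩
  rw [partner, dif_pos hex]
  obtain ⟨hmem, hcol'⟩ := hex.choose_spec
  exact Sym2.congr_right.1 (hcol _ hmem _ h v (Sym2.mem_mk_left _ _) (Sym2.mem_mk_left _ _)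
    (hcol'.trans hk.symm))

theorem partner_eq_self (h : IsMissingColor E col v k) : partner E col k v = v :=
  dif_neg fun ⟨_, hw, hk⟩ => h.ne hw hk

theorem partner_involutive (hcol : IsProperEdgeColoring E col) :
    (partner E col k).Involutive := by
  intro v
  by_cases h : ∃ w, s(v, w) ∈ E ∧ col s(v, w) = k
  · obtain ⟨w, hw, hk⟩ := h
    rw [partner_eq_of_mem hcol hw hk]
    rw [Sym2.eq_swap] at hw hk
    exact partner_eq_of_mem hcol hw hk
  · have hv : IsMissingColor E col v k := by
      intro e he hve hk
      obtain ⟨w, rfl⟩ := Sym2.mem_iff_exists.1 hve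
      exact h ⟨w, he, hk⟩
    rw [partner_eq_self hv, partner_eq_self hv]

theorem isKempeClosed_range_altWalk (hcol : IsProperEdgeColoring E col) {x : V} {c d : α}
    (hc : IsMissingColor E col x c) :
    IsKempeClosed E col c d (Set.range (altWalk (partner E col c) (partner E col d) x)) := by
  rintro v w hvw hvwcd ⟨n, rfl⟩
  have hwalk := apply_altWalk_mem_range (partner_involutive (k := c) hcol)
    (partner_involutive (k := d) hcol) (partner_eq_self hc) n
  rcases hvwcd with h | h <;> rw [← partner_eq_of_mem hcol hvw h]
  exacts [hwalk.1, hwalk.2]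

end Partner

section Fan

variable {V α : Type*} {E : Finset (Sym2 V)} {col : Sym2 V → α} {x : V} {F : ℕ → V} {r : ℕ}

structure IsFan (E : Finset (Sym2 V)) (col : Sym2 V → α) (x : V) (F : ℕ → V) (r : ℕ) :
    Prop where
  ne_center : ∀ i ≤ r, F i ≠ x
  injOn : ∀ i ≤ r, ∀ j ≤ r, F i = F j → i = j
  mem : ∀ i < r, s(x, F (i + 1)) ∈ E
  isMissingColor : ∀ i < r, IsMissingColor E col (F i) (col s(x, F (i + 1)))

theorem IsFan.of_le (hfan : IsFan E col x F r) {r' : ℕ} (hr : r' ≤ r) : IsFan E col x F r' where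
  ne_center i hi := hfan.ne_center i (hi.trans hr)
  injOn i hi j hj := hfan.injOn i (hi.trans hr) j (hj.trans hr)
  mem i hi := hfan.mem i (by omega)
  isMissingColor i hi := hfan.isMissingColor i (by omega)

theorem IsFan.lt_card [Fintype V] (hfan : IsFan E col x F r) : r < Fintype.card V := by
  have hinj : Function.Injective fun i : Fin (r + 1) => F i :=
    fun i j hij => Fin.ext (hfan.injOn i (by omega) j (by omega) hij)
  simpa using Fintype.card_le_of_injective _ hinj

theorem IsFan.extend (hfan : IsFan E col x F r) (hE : ∀ e ∈ E, ¬ e.IsDiag) {u : V}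
    (hu : s(x, u) ∈ E) (hnew : ∀ i ≤ r, F i ≠ u)
    (hmiss : IsMissingColor E col (F r) (col s(x, u))) :
    IsFan E col x (Function.update F (r + 1) u) (r + 1) := by
  have hF : ∀ i ≤ r, Function.update F (r + 1) u i = F i :=
    fun i hi => Function.update_of_ne (by omega) _ _
  have hux : u ≠ x := fun h => hE _ hu (Sym2.mk_isDiag_iff.2 h.symm)
  refine ⟨fun i hi => ?_, fun i hi j hj hij => ?_, fun i hi => ?_, fun i hi => ?_⟩
  · rcases Nat.lt_or_ge i (r + 1) with h | h
    · rw [hF i (by omega)]; exact hfan.ne_center i (by omega)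
    · rw [show i = r + 1 by omega, Function.update_self]; exact hux
  · rcases Nat.lt_or_ge i (r + 1) with h₁ | h₁ <;> rcases Nat.lt_or_ge j (r + 1) with h₂ | h₂
    · rw [hF i (by omega), hF j (by omega)] at hij
      exact hfan.injOn i (by omega) j (by omega) hij
    · rw [hF i (by omega), show j = r + 1 by omega, Function.update_self] at hij
      exact absurd hij (hnew i (by omega))
    · rw [hF j (by omega), show i = r + 1 by omega, Function.update_self] at hij
      exact absurd hij.symm (hnew j (by omega))
    · omega
  · rcases Nat.lt_or_ge (i + 1) (r + 1) with h | h
    · rw [hF (i + 1) (by omega)]; exact hfan.mem i (by omega)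
    · rw [show i = r by omega, Function.update_self]; exact hu
  · rw [hF i (by omega)]
    rcases Nat.lt_or_ge (i + 1) (r + 1) with h | h
    · rw [hF (i + 1) (by omega)]; exact hfan.isMissingColor i (by omega)
    · rw [show i = r by omega, Function.update_self]; exact hmiss

theorem exists_maximal_isFan [Fintype V] (hE : ∀ e ∈ E, ¬ e.IsDiag) (col : Sym2 V → α)
    {x y : V} (hyx : y ≠ x) :
    ∃ F r, IsFan E col x F r ∧ F 0 = y ∧
      ∀ u, s(x, u) ∈ E → IsMissingColor E col (F r) (col s(x, u)) → ∃ i ≤ r, F i = u := by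
  classical
  let P : ℕ → Prop := fun r => ∃ F, IsFan E col x F r ∧ F 0 = y
  have hP0 : P 0 := ⟨fun _ => y, ⟨fun _ _ => hyx, fun _ _ _ _ _ => by omega,
    fun _ h => absurd h (Nat.not_lt_zero _), fun _ h => absurd h (Nat.not_lt_zero _)⟩, rfl⟩
  set r := Nat.findGreatest P (Fintype.card V)
  obtain ⟨F, hfan, hF0⟩ : P r := Nat.findGreatest_spec (Nat.zero_le _) hP0
  refine ⟨F, r, hfan, hF0, fun u hu hmiss => ?_⟩
  by_contra! hnew
  have hext := hfan.extend hE hu hnew hmiss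
  have hle : r + 1 ≤ r := Nat.le_findGreatest hext.lt_card.le
    ⟨_, hext, by rw [Function.update_of_ne (by omega), hF0]⟩
  omega

theorem exists_lt_col_eq_of_maximal (hnew : s(x, F 0) ∉ E)
    (hmax : ∀ u, s(x, u) ∈ E → IsMissingColor E col (F r) (col s(x, u)) → ∃ i ≤ r, F i = u)
    {d : α} (hd : IsMissingColor E col (F r) d) (hdx : ¬ IsMissingColor E col x d) :
    ∃ i < r, col s(x, F (i + 1)) = d := by
  simp only [IsMissingColor, not_forall, not_not] at hdx
  obtain ⟨e, he, hxe, hed⟩ := hdx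
  obtain ⟨u, rfl⟩ := Sym2.mem_iff_exists.1 hxe
  obtain ⟨j, hjr, rfl⟩ := hmax u he (hed ▸ hd)
  rcases j with _ | i
  · exact absurd he hnew
  · exact ⟨i, by omega, hed⟩

/-- Shifting colours down the fan frees the edge `x F 0` for a colour missing at `x` and `F r`. -/
theorem IsFan.exists_isProperEdgeColoring_insert [DecidableEq V] (hfan : IsFan E col x F r)
    (hcol : IsProperEdgeColoring E col) {β : α} (hx : IsMissingColor E col x β)
    (hr : IsMissingColor E col (F r) β) :
    ∃ col' : Sym2 V → α, IsProperEdgeColoring (insert s(x, F 0) E) col' := by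
  induction r generalizing col β with
  | zero =>
    refine ⟨Function.update col s(x, F 0) β, hcol.insert_update fun v hv => ?_⟩
    rcases Sym2.mem_iff.1 hv with rfl | rfl
    exacts [hx, hr]
  | succ r ih =>
    set e := s(x, F (r + 1))
    have he : e ∈ E := hfan.mem r (lt_add_one r)
    have hnot : ∀ i ≤ r, F i ∉ e := fun i hi h => by
      rcases Sym2.mem_iff.1 h with h | h
      · exact hfan.ne_center i (by omega) h
      · have := hfan.injOn i (by omega) (r + 1) le_rfl h
        omega
    have hcol₁ : IsProperEdgeColoring E (Function.update col e β) := by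
      have := (hcol.mono (erase_subset e E)).insert_update (e := e) (β := β) fun v hv => by
        rcases Sym2.mem_iff.1 hv with rfl | rfl
        exacts [hx.mono (erase_subset _ _), hr.mono (erase_subset _ _)]
      rwa [insert_erase he] at this
    have hfan₁ : IsFan E (Function.update col e β) x F r := { hfan.of_le (Nat.le_succ r) with
      isMissingColor := fun i hi => by
        have hne : s(x, F (i + 1)) ≠ e := fun h => by
          have := hfan.injOn (i + 1) (by omega) (r + 1) le_rfl (Sym2.congr_right.1 h)
          omega
        rw [Function.update_of_ne hne]
        exact (hfan.isMissingColor i (by omega)).update_of_notMem (hnot i hi.le) β }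
    have hx₁ : IsMissingColor E (Function.update col e β) x (col e) := by
      intro f hf hxf hfe
      by_cases hfe' : f = e
      · rw [hfe', Function.update_self] at hfe
        exact hx.ne he hfe.symm
      · rw [Function.update_of_ne hfe'] at hfe
        exact hfe' (hcol f hf e he x hxf (Sym2.mem_mk_left _ _) hfe)
    exact ih hfan₁ hcol₁ hx₁
      ((hfan.isMissingColor r (lt_add_one r)).update_of_notMem (hnot r le_rfl) β)

end Fan

section Vizing

variable {V α : Type*} [DecidableEq α] {E : Finset (Sym2 V)}
  {col : Sym2 V → α}

/-- The `d`-edge at `x` is a fan edge `x F (i + 1)`, so swapping `c` and `d` on the alternating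
path from `x` either makes `d` missing at `F i` or leaves it missing at `F r`, as that path has
only one end besides `x`. -/
theorem exists_isFan_isMissingColor_center_tip (hcol : IsProperEdgeColoring E col) {x : V}
    {F : ℕ → V} {r : ℕ} (hfan : IsFan E col x F r) (hnew : s(x, F 0) ∉ E)
    (hmax : ∀ u, s(x, u) ∈ E → IsMissingColor E col (F r) (col s(x, u)) → ∃ i ≤ r, F i = u)
    {c d : α} (hc : IsMissingColor E col x c) (hd : IsMissingColor E col (F r) d)
    (hdx : ¬ IsMissingColor E col x d) :
    ∃ (col' : Sym2 V → α) (r' : ℕ), IsProperEdgeColoring E col' ∧ IsFan E col' x F r' ∧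
      IsMissingColor E col' x d ∧ IsMissingColor E col' (F r') d := by
  obtain ⟨i, hir, hi⟩ := exists_lt_col_eq_of_maximal hnew hmax hd hdx
  have hdi : IsMissingColor E col (F i) d := hi ▸ hfan.isMissingColor i hir
  set S := Set.range (altWalk (partner E col c) (partner E col d) x)
  have hS : IsKempeClosed E col c d S := isKempeClosed_range_altWalk hcol hc
  have hxS : x ∈ S := ⟨0, rfl⟩
  have hx' : IsMissingColor E (swapColorsOn S c d col) x d := by
    rwa [isMissingColor_swapColorsOn_iff_of_mem hxS, Equiv.swap_apply_right]
  have hfan' : ∀ j < r, j ≠ i →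
      IsMissingColor E (swapColorsOn S c d col) (F j) (swapColorsOn S c d col s(x, F (j + 1))) := by
    intro j hj hji
    have hjc : col s(x, F (j + 1)) ≠ c := hc.ne (hfan.mem j hj)
    have hjd : col s(x, F (j + 1)) ≠ d := fun h => hji <| by
      have := hcol _ (hfan.mem j hj) _ (hfan.mem i hir) x (Sym2.mem_mk_left _ _)
        (Sym2.mem_mk_left _ _) (h.trans hi.symm)
      have := hfan.injOn (j + 1) (by omega) (i + 1) (by omega) (Sym2.congr_right.1 this)
      omega
    rw [(swapColorsOn_eq_iff_of_ne hjc hjd).2 rfl, isMissingColor_swapColorsOn_iff_of_ne hjc hjd]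
    exact hfan.isMissingColor j hj
  by_cases hA : IsMissingColor E (swapColorsOn S c d col) (F i) d
  · exact ⟨_, i, hcol.swapColorsOn hS,
      { hfan.of_le hir.le with isMissingColor := fun j hj => hfan' j (by omega) hj.ne }, hx', hA⟩
  have hiS : F i ∈ S := by
    by_contra h
    exact hA ((isMissingColor_swapColorsOn_iff_of_notMem hS h).2 hdi)
  have hrS : F r ∉ S := fun hrS => by
    have := eq_of_fixed_mem_range_altWalk (partner_involutive hcol) (partner_involutive hcol)
      (partner_eq_self hc) hiS hrS (partner_eq_self hdi) (partner_eq_self hd)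
    have := hfan.injOn i hir.le r le_rfl this
    omega
  refine ⟨_, r, hcol.swapColorsOn hS, { hfan with isMissingColor := fun j hj => ?_ }, hx',
    (isMissingColor_swapColorsOn_iff_of_notMem hS hrS).2 hd⟩
  rcases eq_or_ne j i with rfl | hji
  · rwa [swapColorsOn_of_mem hxS (Sym2.mem_mk_left _ _), hi, Equiv.swap_apply_right,
      isMissingColor_swapColorsOn_iff_of_mem hiS, Equiv.swap_apply_left]
  · exact hfan' j hj hji

theorem exists_isProperEdgeColoring_insert [Fintype V] [DecidableEq V] [Fintype α]
    (hE : ∀ e ∈ E, ¬ e.IsDiag) (hcol : IsProperEdgeColoring E col)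
    (hdeg : ∀ v, #(E.filter (v ∈ ·)) < Fintype.card α)
    {x y : V} (hyx : y ≠ x) (hnew : s(x, y) ∉ E) :
    ∃ col' : Sym2 V → α, IsProperEdgeColoring (insert s(x, y) E) col' := by
  obtain ⟨F, r, hfan, rfl, hmax⟩ := exists_maximal_isFan hE col hyx
  obtain ⟨c, hc⟩ := exists_isMissingColor col x (hdeg x)
  obtain ⟨d, hd⟩ := exists_isMissingColor col (F r) (hdeg (F r))
  obtain ⟨col', r', hcol', hfan', hx', hr'⟩ : ∃ (col' : Sym2 V → α) (r' : ℕ),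
      IsProperEdgeColoring E col' ∧ IsFan E col' x F r' ∧
        IsMissingColor E col' x d ∧ IsMissingColor E col' (F r') d := by
    by_cases hdx : IsMissingColor E col x d
    · exact ⟨col, r, hcol, hfan, hdx, hd⟩
    · exact exists_isFan_isMissingColor_center_tip hcol hfan hnew hmax hc hd hdx
  exact hfan'.exists_isProperEdgeColoring_insert hcol' hx' hr'

theorem exists_isProperEdgeColoring_of_degree_le [Fintype V] [DecidableEq V]
    (E : Finset (Sym2 V)) (hE : ∀ e ∈ E, ¬ e.IsDiag) {d : ℕ} (hdeg : ∀ v, #(E.filter (v ∈ ·)) ≤ d) :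
    ∃ col : Sym2 V → Fin (d + 1), IsProperEdgeColoring E col := by
  induction E using Finset.induction_on with
  | empty => exact ⟨fun _ => 0, fun e he => absurd he (notMem_empty e)⟩
  | insert e E he ih =>
    have hE' : ∀ f ∈ E, ¬ f.IsDiag := fun f hf => hE f (mem_insert_of_mem hf)
    have hdeg' : ∀ v, #(E.filter (v ∈ ·)) ≤ d :=
      fun v => (card_le_card (filter_subset_filter _ (subset_insert e E))).trans (hdeg v)
    obtain ⟨col, hcol⟩ := ih hE' hdeg'
    induction e using Sym2.ind with
    | h x y =>
      have hyx : y ≠ x := fun h => hE _ (mem_insert_self _ _) (Sym2.mk_isDiag_iff.2 h.symm)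
      exact exists_isProperEdgeColoring_insert hE' hcol
        (fun v => by simpa using Nat.lt_succ_of_le (hdeg' v)) hyx he

end Vizing

section PairwiseMRF

variable {V S : Type*}

def IsMatching (M : Finset (V × V)) : Prop :=
  ∀ p ∈ M, ∀ q ∈ M, ∀ v ∈ s(p.1, p.2), v ∈ s(q.1, q.2) → p = q

theorem isMatching_filter_of_isProperEdgeColoring [DecidableEq V] {α : Type*} [DecidableEq α]
    {E : Finset (V × V)} (honce : ∀ p ∈ E, (p.2, p.1) ∉ E) {col : Sym2 V → α}
    (hcol : IsProperEdgeColoring (E.image fun p => s(p.1, p.2)) col) (k : α) :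
    IsMatching (E.filter fun p => col s(p.1, p.2) = k) := by
  intro p hp q hq v hvp hvq
  rw [mem_filter] at hp hq
  have := hcol _ (mem_image_of_mem _ hp.1) _ (mem_image_of_mem _ hq.1) v hvp hvq
    (hp.2.trans hq.2.symm)
  rcases Sym2.mk_eq_mk_iff.1 this with h | rfl
  · exact h
  · exact absurd hp.1 (honce q hq.1)

theorem exists_assignment_of_isMatching [Nonempty S] {M : Finset (V × V)}
    (hirr : ∀ p ∈ M, p.1 ≠ p.2) (hM : IsMatching M) (b : V × V → S × S) :
    ∃ x : V → S, ∀ p ∈ M, x p.1 = (b p).1 ∧ x p.2 = (b p).2 := by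
  classical
  refine ⟨fun v => if h : ∃ p ∈ M, p.1 = v then (b h.choose).1
    else if h' : ∃ p ∈ M, p.2 = v then (b h'.choose).2 else Classical.arbitrary S, fun p hp => ?_⟩
  have h₁ : ∃ q ∈ M, q.1 = p.1 := ⟨p, hp, rfl⟩
  have h₂ : ∃ q ∈ M, q.2 = p.2 := ⟨p, hp, rfl⟩
  obtain ⟨hq₁, hq₁p⟩ := h₁.choose_spec
  obtain ⟨hq₂, hq₂p⟩ := h₂.choose_spec
  have e₁ : h₁.choose = p :=
    hM _ hq₁ p hp _ (Sym2.mem_mk_left _ _) (by rw [hq₁p]; exact Sym2.mem_mk_left _ _)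
  have e₂ : h₂.choose = p :=
    hM _ hq₂ p hp _ (Sym2.mem_mk_right _ _) (by rw [hq₂p]; exact Sym2.mem_mk_right _ _)
  have h₁' : ¬ ∃ q ∈ M, q.1 = p.2 := fun ⟨q, hq, hqp⟩ => by
    have := hM q hq p hp _ (Sym2.mem_mk_left _ _) (by rw [hqp]; exact Sym2.mem_mk_right _ _)
    exact hirr p hp (this ▸ hqp)
  simp only [dif_pos h₁, dif_neg h₁', dif_pos h₂, e₁, e₂, and_self]

theorem exists_sum_sup'_le_energy [Fintype V] [Fintype S] [Nonempty S] {E M : Finset (V × V)}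
    (hME : M ⊆ E) (hirr : ∀ p ∈ M, p.1 ≠ p.2) (hM : IsMatching M)
    {lnφ : V → S → ℝ} {lnψ : V → V → S → S → ℝ} (hφ : ∀ i σ, 0 ≤ lnφ i σ)
    (hψ : ∀ i j σ σ', 0 ≤ lnψ i j σ σ') :
    ∃ x : V → S, ∑ p ∈ M, univ.sup' univ_nonempty (fun σ : S × S => lnψ p.1 p.2 σ.1 σ.2)
      ≤ ∑ i, lnφ i (x i) + ∑ p ∈ E, lnψ p.1 p.2 (x p.1) (x p.2) := by
  choose b _ hb using fun p : V × V =>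
    exists_mem_eq_sup' univ_nonempty fun σ : S × S => lnψ p.1 p.2 σ.1 σ.2
  obtain ⟨x, hx⟩ := exists_assignment_of_isMatching hirr hM b
  refine ⟨x, ?_⟩
  calc ∑ p ∈ M, univ.sup' univ_nonempty (fun σ : S × S => lnψ p.1 p.2 σ.1 σ.2)
      = ∑ p ∈ M, lnψ p.1 p.2 (x p.1) (x p.2) :=
        sum_congr rfl fun p hp => by rw [hb, (hx p hp).1, (hx p hp).2]
    _ ≤ ∑ p ∈ E, lnψ p.1 p.2 (x p.1) (x p.2) :=
        sum_le_sum_of_subset_of_nonneg hME fun _ _ _ => hψ _ _ _ _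
    _ ≤ _ := le_add_of_nonneg_left (sum_nonneg fun i _ => hφ _ _)

end PairwiseMRF

theorem stmt_9 {V S : Type*} [Fintype V] [DecidableEq V] [Fintype S] [Nonempty S]
    (E : Finset (V × V))
    (hirr : ∀ p ∈ E, p.1 ≠ p.2)
    (honce : ∀ p ∈ E, (p.2, p.1) ∉ E)
    (d : ℕ)
    (hdeg : ∀ v : V, (E.filter (fun p => p.1 = v ∨ p.2 = v)).card ≤ d)
    (lnφ : V → S → ℝ) (lnψ : V → V → S → S → ℝ)
    (hφ : ∀ i σ, 0 ≤ lnφ i σ) (hψ : ∀ i j σ σ', 0 ≤ lnψ i j σ σ')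
    (H : (V → S) → ℝ)
    (hH : ∀ x, H x = ∑ i, lnφ i (x i) + ∑ p ∈ E, lnψ p.1 p.2 (x p.1) (x p.2))
    (xstar : V → S) (hmax : ∀ x, H x ≤ H xstar) :
    ∑ p ∈ E,
      ((Finset.univ.sup' Finset.univ_nonempty fun σ : S × S => lnψ p.1 p.2 σ.1 σ.2)
        - (Finset.univ.inf' Finset.univ_nonempty fun σ : S × S => lnψ p.1 p.2 σ.1 σ.2))
      ≤ ((d : ℝ) + 1) * H xstar := by
  have hloop : ∀ e ∈ E.image (fun p => s(p.1, p.2)), ¬ e.IsDiag := by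
    simp only [mem_image, forall_exists_index, and_imp]
    rintro _ p hp rfl
    exact Sym2.mk_isDiag_iff.not.2 (hirr p hp)
  have hdeg' : ∀ v, #((E.image fun p => s(p.1, p.2)).filter (v ∈ ·)) ≤ d := fun v => by
    rw [filter_image]
    refine card_image_le.trans (le_of_eq_of_le ?_ (hdeg v))
    refine congrArg card (filter_congr fun p _ => ?_)
    rw [Sym2.mem_iff, eq_comm, @eq_comm _ v]
  obtain ⟨col, hcol⟩ := exists_isProperEdgeColoring_of_degree_le _ hloop hdeg'
  calc _ ≤ ∑ p ∈ E, univ.sup' univ_nonempty (fun σ : S × S => lnψ p.1 p.2 σ.1 σ.2) :=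
        sum_le_sum fun p _ => sub_le_self _ (le_inf' _ _ fun _ _ => hψ _ _ _ _)
    _ = ∑ k, ∑ p ∈ E with col s(p.1, p.2) = k,
          univ.sup' univ_nonempty (fun σ : S × S => lnψ p.1 p.2 σ.1 σ.2) :=
        (sum_fiberwise E _ _).symm
    _ ≤ ∑ _k : Fin (d + 1), H xstar := sum_le_sum fun k _ => by
        obtain ⟨x, hx⟩ := exists_sum_sup'_le_energy (filter_subset _ E)
          (fun p hp => hirr p (mem_of_mem_filter p hp))
          (isMatching_filter_of_isProperEdgeColoring honce hcol k) hφ hψ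
        exact hx.trans ((hH x).symm.trans_le (hmax x))
    _ = ((d : ℝ) + 1) * H xstar := by simp
end

section
/- Let G = (V,E) carry a pairwise MRF with energy H as above, and let V = V₁ ∪ ... ∪ V_p be a partition with E_k = (V_k × V_k) ∩ E and boundary B = E \ ∪_k E_k. If x̂ is the assignment obtained by exactly maximizing the restricted energy H_k on each subgraph G_k = (V_k, E_k) separately, then H(x̂) ≥ H(x̄*) - ∑_{(i,j)∈B} (ψ^U_{ij} - ψ^L_{ij}), where x̄* is any global maximizer of H. -/
/-! The energy splits as the sum of the block energies `H_k` plus the energy of the boundary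
edges. Replacing `x̄*` by `x̂` can only increase every block energy, since `x̂` maximizes
each `H_k`, while on a boundary edge it lowers `ln ψ_ij` by at most its oscillation
`ψ^U_ij - ψ^L_ij`. -/

open Finset

theorem Finset.sub_le_sup'_sub_inf' {α β : Type*} [AddCommGroup β] [LinearOrder β]
    [IsOrderedAddMonoid β] {s : Finset α} (hs : s.Nonempty) (f : α → β) {a b : α}
    (ha : a ∈ s) (hb : b ∈ s) :
    f a - f b ≤ s.sup' hs f - s.inf' hs f :=
  sub_le_sub (le_sup' f ha) (inf'_le f hb)

section Partition

variable {V ι M : Type*} [DecidableEq ι] [AddCommMonoid M] (part : V → ι) {K : Finset ι}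

theorem sum_blocks_eq_sum_filter_part_eq (E : Finset (V × V)) (f : V × V → M)
    (hK : ∀ i, part i ∈ K) :
    ∑ k ∈ K, ∑ p ∈ E with part p.1 = k ∧ part p.2 = k, f p =
      ∑ p ∈ E with part p.1 = part p.2, f p := by
  rw [← sum_fiberwise_of_maps_to (g := fun p : V × V => part p.1) (fun p _ => hK p.1)]
  refine sum_congr rfl fun k _ => sum_congr ?_ fun _ _ => rfl
  rw [filter_filter]
  refine filter_congr fun p _ => ?_
  constructor
  · rintro ⟨h₁, h₂⟩
    exact ⟨h₁.trans h₂.symm, h₁⟩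
  · rintro ⟨h, h₁⟩
    exact ⟨h₁, h ▸ h₁⟩

theorem sum_add_sum_eq_sum_blocks_add_boundary [Fintype V] (E : Finset (V × V)) (g : V → M)
    (f : V × V → M) (hK : ∀ i, part i ∈ K) :
    ∑ i, g i + ∑ p ∈ E, f p =
      ∑ k ∈ K, ((∑ i with part i = k, g i) +
          ∑ p ∈ E with part p.1 = k ∧ part p.2 = k, f p) +
        ∑ p ∈ E with part p.1 ≠ part p.2, f p := by
  rw [sum_add_distrib, sum_fiberwise_of_maps_to (fun i _ => hK i),
    sum_blocks_eq_sum_filter_part_eq part E f hK, add_assoc,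
    sum_filter_add_sum_filter_not]

end Partition

theorem stmt_10_general {V S ι : Type*} [Fintype V] [Fintype S] [Nonempty S]
    [DecidableEq ι]
    (E : Finset (V × V))
    (lnφ : V → S → ℝ) (lnψ : V → V → S → S → ℝ)
    (part : V → ι)
    (H : (V → S) → ℝ)
    (hH : ∀ x, H x = ∑ i, lnφ i (x i) + ∑ p ∈ E, lnψ p.1 p.2 (x p.1) (x p.2))
    (Hk : ι → (V → S) → ℝ)
    (hHk : ∀ k x, Hk k x =
      (∑ i ∈ Finset.univ.filter (fun i => part i = k), lnφ i (x i)) +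
      ∑ p ∈ E.filter (fun p => part p.1 = k ∧ part p.2 = k),
        lnψ p.1 p.2 (x p.1) (x p.2))
    (xhat : V → S) (hopt : ∀ k x, Hk k x ≤ Hk k xhat)
    (xstar : V → S) :
    H xstar -
      (∑ p ∈ E.filter (fun p => part p.1 ≠ part p.2),
        ((Finset.univ.sup' Finset.univ_nonempty fun σ : S × S => lnψ p.1 p.2 σ.1 σ.2)
          - (Finset.univ.inf' Finset.univ_nonempty fun σ : S × S => lnψ p.1 p.2 σ.1 σ.2)))
      ≤ H xhat := by
  set K := univ.image part
  set B := E.filter fun p => part p.1 ≠ part p.2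
  have hdecomp : ∀ x, H x = ∑ k ∈ K, Hk k x + ∑ p ∈ B, lnψ p.1 p.2 (x p.1) (x p.2) := by
    intro x
    simp only [hH, hHk]
    exact sum_add_sum_eq_sum_blocks_add_boundary part E _ _ fun i =>
      mem_image_of_mem part (mem_univ i)
  have hblocks : ∑ k ∈ K, Hk k xstar ≤ ∑ k ∈ K, Hk k xhat :=
    sum_le_sum fun k _ => hopt k xstar
  have hboundary :
      ∑ p ∈ B, lnψ p.1 p.2 (xstar p.1) (xstar p.2) -
          ∑ p ∈ B, lnψ p.1 p.2 (xhat p.1) (xhat p.2) ≤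
        ∑ p ∈ B, ((univ.sup' univ_nonempty fun σ : S × S => lnψ p.1 p.2 σ.1 σ.2) -
          univ.inf' univ_nonempty fun σ : S × S => lnψ p.1 p.2 σ.1 σ.2) := by
    rw [← sum_sub_distrib]
    exact sum_le_sum fun p _ =>
      sub_le_sup'_sub_inf' univ_nonempty (fun σ : S × S => lnψ p.1 p.2 σ.1 σ.2)
        (mem_univ (xstar p.1, xstar p.2)) (mem_univ (xhat p.1, xhat p.2))
  rw [hdecomp xstar, hdecomp xhat]
  linarith

theorem stmt_10 {V S ι : Type*} [Fintype V] [DecidableEq V] [Fintype S] [Nonempty S]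
    [Fintype ι] [DecidableEq ι]
    (E : Finset (V × V))
    (hirr : ∀ p ∈ E, p.1 ≠ p.2)
    (honce : ∀ p ∈ E, (p.2, p.1) ∉ E)
    (lnφ : V → S → ℝ) (lnψ : V → V → S → S → ℝ)
    (hφ : ∀ i σ, 0 ≤ lnφ i σ) (hψ : ∀ i j σ σ', 0 ≤ lnψ i j σ σ')
    (part : V → ι)
    (H : (V → S) → ℝ)
    (hH : ∀ x, H x = ∑ i, lnφ i (x i) + ∑ p ∈ E, lnψ p.1 p.2 (x p.1) (x p.2))
    (Hk : ι → (V → S) → ℝ)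
    (hHk : ∀ k x, Hk k x =
      (∑ i ∈ Finset.univ.filter (fun i => part i = k), lnφ i (x i)) +
      ∑ p ∈ E.filter (fun p => part p.1 = k ∧ part p.2 = k),
        lnψ p.1 p.2 (x p.1) (x p.2))
    (xhat : V → S) (hopt : ∀ k x, Hk k x ≤ Hk k xhat)
    (xstar : V → S) (hmax : ∀ x, H x ≤ H xstar) :
    H xstar -
      (∑ p ∈ E.filter (fun p => part p.1 ≠ part p.2),
        ((Finset.univ.sup' Finset.univ_nonempty fun σ : S × S => lnψ p.1 p.2 σ.1 σ.2)
          - (Finset.univ.inf' Finset.univ_nonempty fun σ : S × S => lnψ p.1 p.2 σ.1 σ.2)))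
      ≤ H xhat :=
  stmt_10_general E lnφ lnψ part H hH Hk hHk xhat hopt xstar
end
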